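/- arXiv:2508.03372 — 4 statements merged into one kernel-verified Lean document; each statement's English description precedes it below -/
import Mathlib

section
/- Let N be a finite group and let G₁, G₂ be subgroups of Equiv.Perm N contained in Hol(N), with G₁ transitive on N. If G₁ and G₂ are conjugate by an element of Hol(N), then there exists β ∈ MulAut N such that conjugation by the permutation induced by β carries G₁ onto G₂ and carries the stabilizer {g ∈ G₁ | g(1) = 1} of the identity element 1 ∈ N in G₁ onto the stabilizer {g ∈ G₂ | g(1) = 1} of 1 in G₂; in particular G₂ is also transitive on N. -/
/-- The left regular representation of a group `N` in `Equiv.Perm N`. -/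
def leftReg (N : Type*) [Group N] : N →* Equiv.Perm N :=
  MulAction.toPermHom N N

/-- The holomorph of `N`: the normalizer of the image of the left regular
representation inside `Equiv.Perm N`. -/
def Hol (N : Type*) [Group N] : Subgroup (Equiv.Perm N) :=
  Subgroup.normalizer ((leftReg N).range : Set (Equiv.Perm N))

/-- A subgroup of `Equiv.Perm N` is transitive on `N`. -/
def IsTransitiveSubgroup {N : Type*} [Group N] (M : Subgroup (Equiv.Perm N)) : Prop :=
  ∀ a b : N, ∃ g ∈ M, g a = b

/-!
If `h ∈ Hol N` conjugates `G₁` onto `G₂`, pick `g ∈ G₁` with `g 1 = h⁻¹ 1`; then `k = h * g`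
still conjugates `G₁` onto `G₂`, lies in `Hol N` and fixes `1`. A permutation in the normalizer
of `λ(N)` fixing `1` satisfies `k λ(x) k⁻¹ = λ(k x)`, i.e. `k (x * y) = k x * k y`, so it is an
automorphism `β`. Conjugation by `β` fixes the point `1`, hence matches the stabilizers of `1`.
-/

open Equiv

namespace Subgroup

variable {G : Type*} [Group G]

theorem map_conj_mul_of_mem {H : Subgroup G} (h : G) {g : G} (hg : g ∈ H) :
    H.map (MulAut.conj (h * g)).toMonoidHom = H.map (MulAut.conj h).toMonoidHom := by
  have hgH : H.map (MulAut.conj g).toMonoidHom = H :=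
    mem_normalizer_iff_map_conj_eq.mp (le_normalizer hg)
  conv_rhs => rw [← hgH, map_map]
  rw [map_mul]
  rfl

end Subgroup

section PermConj

variable {α : Type*} {G₁ G₂ : Subgroup (Perm α)} {k : Perm α}

theorem image_conj_setOf_fixing_eq (hmap : G₁.map (MulAut.conj k).toMonoidHom = G₂)
    {a : α} (hk : k a = a) :
    (fun g : Perm α => k * g * k⁻¹) '' {g | g ∈ G₁ ∧ g a = a} = {g | g ∈ G₂ ∧ g a = a} := by
  have hstab : (MulAction.stabilizer (Perm α) a).map (MulAut.conj k).toMonoidHom =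
      MulAction.stabilizer (Perm α) a := by
    rw [← MulAction.stabilizer_smul_eq_stabilizer_map_conj, Perm.smul_def, hk]
  have := congrArg SetLike.coe (Subgroup.map_inf_eq G₁ (MulAction.stabilizer (Perm α) a)
    (MulAut.conj k).toMonoidHom (MulAut.conj k).injective)
  rw [hmap, hstab] at this
  simpa [Set.ext_iff] using this

end PermConj

theorem IsTransitiveSubgroup.map_conj {N : Type*} [Group N] {G : Subgroup (Perm N)}
    (hG : IsTransitiveSubgroup G) (k : Perm N) :
    IsTransitiveSubgroup (G.map (MulAut.conj k).toMonoidHom) := by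
  intro a b
  obtain ⟨g, hgG, hg⟩ := hG (k⁻¹ a) (k⁻¹ b)
  exact ⟨k * g * k⁻¹, Subgroup.mem_map_of_mem _ hgG, by
    rw [Perm.mul_apply, Perm.mul_apply, hg]; exact k.apply_symm_apply b⟩

@[simp]
theorem leftReg_apply {N : Type*} [Group N] (x y : N) : leftReg N x y = x * y := rfl

namespace Hol

variable {N : Type*} [Group N]

-- The conjugate is some `leftReg N y`; evaluating at `1` identifies `y = h x`.
theorem conj_leftReg {h : Perm N} (hh : h ∈ Hol N) (h1 : h 1 = 1) (x : N) :
    h * leftReg N x * h⁻¹ = leftReg N (h x) := by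
  obtain ⟨y, hy⟩ := (Subgroup.mem_normalizer_iff.mp hh (leftReg N x)).mp ⟨x, rfl⟩
  have hy1 : (h * leftReg N x * h⁻¹) 1 = h x := by
    simp [Perm.mul_apply, Perm.inv_eq_iff_eq.mpr h1.symm]
  rw [← hy, leftReg_apply, mul_one] at hy1
  rw [← hy, hy1]

theorem exists_mulAut_toPerm_eq {h : Perm N} (hh : h ∈ Hol N) (h1 : h 1 = 1) :
    ∃ β : MulAut N, MulAut.toPerm N β = h :=
  ⟨{ toEquiv := h
     map_mul' := fun x y => by
      simpa [Perm.mul_apply] using congrArg (· (h y)) (conj_leftReg hh h1 x) }, rfl⟩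

end Hol

theorem conj_in_hol_gives_perm_group_isom_general (N : Type*) [Group N]
    (G₁ G₂ : Subgroup (Equiv.Perm N)) (hG₁ : G₁ ≤ Hol N)
    (htrans : IsTransitiveSubgroup G₁)
    (hconj : ∃ h ∈ Hol N, Subgroup.map (MulAut.conj h).toMonoidHom G₁ = G₂) :
    ∃ β : MulAut N,
      Subgroup.map (MulAut.conj (MulAut.toPerm N β)).toMonoidHom G₁ = G₂ ∧
      (fun g : Equiv.Perm N => MulAut.toPerm N β * g * (MulAut.toPerm N β)⁻¹) ''
          {g : Equiv.Perm N | g ∈ G₁ ∧ g 1 = 1} =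
        {g : Equiv.Perm N | g ∈ G₂ ∧ g 1 = 1} ∧
      IsTransitiveSubgroup G₂ := by
  obtain ⟨h, hh, hmap⟩ := hconj
  obtain ⟨g, hg, hg1⟩ := htrans 1 (h⁻¹ 1)
  have hk1 : (h * g) 1 = 1 := by simp [Perm.mul_apply, hg1]
  have hkmap : G₁.map (MulAut.conj (h * g)).toMonoidHom = G₂ := by
    rw [Subgroup.map_conj_mul_of_mem h hg, hmap]
  obtain ⟨β, hβ⟩ := Hol.exists_mulAut_toPerm_eq (mul_mem hh (hG₁ hg)) hk1
  refine ⟨β, hβ ▸ hkmap, hβ ▸ image_conj_setOf_fixing_eq hkmap hk1, ?_⟩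
  exact hkmap ▸ htrans.map_conj (h * g)

theorem conj_in_hol_gives_perm_group_isom (N : Type*) [Group N] [Finite N]
    (G₁ G₂ : Subgroup (Equiv.Perm N)) (hG₁ : G₁ ≤ Hol N) (hG₂ : G₂ ≤ Hol N)
    (htrans : IsTransitiveSubgroup G₁)
    (hconj : ∃ h ∈ Hol N, Subgroup.map (MulAut.conj h).toMonoidHom G₁ = G₂) :
    ∃ β : MulAut N,
      Subgroup.map (MulAut.conj (MulAut.toPerm N β)).toMonoidHom G₁ = G₂ ∧
      (fun g : Equiv.Perm N => MulAut.toPerm N β * g * (MulAut.toPerm N β)⁻¹) ''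
          {g : Equiv.Perm N | g ∈ G₁ ∧ g 1 = 1} =
        {g : Equiv.Perm N | g ∈ G₂ ∧ g 1 = 1} ∧
      IsTransitiveSubgroup G₂ :=
  conj_in_hol_gives_perm_group_isom_general N G₁ G₂ hG₁ htrans hconj
end

section
/- Let N be a finite group, let G be a group, and let δ : G →* N ⋊ Aut(N) be a group homomorphism whose image acts transitively on N under the action (η,α)·μ = η·α(μ). Define g ⊙ μ := δ(g)·μ for g ∈ G, μ ∈ N. Then ⊙ is a transitive action of G on N and it satisfies the skew bracoid relation: for all g ∈ G and all μ, ν ∈ N, g ⊙ (μ·ν) = (g ⊙ μ) · (g ⊙ 1)⁻¹ · (g ⊙ ν), where 1 is the identity of N. -/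
/-- For a group `N`, the holomorph realized as the semidirect product
`N ⋊ Aut(N)` with respect to the identity map `MulAut N →* MulAut N`. -/
abbrev HolSDP (N : Type*) [Group N] :=
  SemidirectProduct N (MulAut N) (MonoidHom.id (MulAut N))

/-- The action of `N ⋊ Aut(N)` on `N` given by `(η, α) · μ = η * α μ`. -/
def holAct {N : Type*} [Group N] (x : HolSDP N) (μ : N) : N :=
  x.left * x.right μ

section

variable {N : Type*} [Group N]

@[simp]
theorem holAct_one (μ : N) : holAct 1 μ = μ := by
  simp [holAct]

theorem holAct_mul (x y : HolSDP N) (μ : N) :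
    holAct (x * y) μ = holAct x (holAct y μ) := by
  simp [holAct, mul_assoc]

theorem holAct_apply_one (x : HolSDP N) : holAct x 1 = x.left := by
  simp [holAct]

theorem holAct_apply_mul (x : HolSDP N) (μ ν : N) :
    holAct x (μ * ν) = holAct x μ * (holAct x 1)⁻¹ * holAct x ν := by
  rw [holAct_apply_one]
  simp only [holAct, map_mul, mul_assoc, inv_mul_cancel_left]

end

theorem skew_bracoid_from_transitive_hom_general (N : Type*) [Group N]
    (G : Type*) [Group G] (δ : G →* HolSDP N)
    (htrans : ∀ μ ν : N, ∃ g : G, holAct (δ g) μ = ν) :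
    -- `g ⊙ μ := δ(g) · μ` is an action of `G` on `N`:
    (∀ μ : N, holAct (δ 1) μ = μ) ∧
    (∀ g k : G, ∀ μ : N, holAct (δ (g * k)) μ = holAct (δ g) (holAct (δ k) μ)) ∧
    -- the action is transitive:
    (∀ μ ν : N, ∃ g : G, holAct (δ g) μ = ν) ∧
    -- and it satisfies the skew bracoid relation:
    (∀ g : G, ∀ μ ν : N,
      holAct (δ g) (μ * ν) =
        holAct (δ g) μ * (holAct (δ g) 1)⁻¹ * holAct (δ g) ν) :=
  ⟨fun μ => by rw [map_one, holAct_one],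
    fun g k μ => by rw [map_mul, holAct_mul],
    htrans,
    fun g => holAct_apply_mul (δ g)⟩

theorem skew_bracoid_from_transitive_hom (N : Type*) [Group N] [Finite N]
    (G : Type*) [Group G] (δ : G →* HolSDP N)
    (htrans : ∀ μ ν : N, ∃ g : G, holAct (δ g) μ = ν) :
    -- `g ⊙ μ := δ(g) · μ` is an action of `G` on `N`:
    (∀ μ : N, holAct (δ 1) μ = μ) ∧
    (∀ g k : G, ∀ μ : N, holAct (δ (g * k)) μ = holAct (δ g) (holAct (δ k) μ)) ∧
    -- the action is transitive:
    (∀ μ ν : N, ∃ g : G, holAct (δ g) μ = ν) ∧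
    -- and it satisfies the skew bracoid relation:
    (∀ g : G, ∀ μ ν : N,
      holAct (δ g) (μ * ν) =
        holAct (δ g) μ * (holAct (δ g) 1)⁻¹ * holAct (δ g) ν) :=
  skew_bracoid_from_transitive_hom_general N G δ htrans
end

section
/- Let p > q be odd primes with p ≡ 1 (mod q). Let φ : Multiplicative (ZMod q) →* MulAut (Multiplicative (ZMod p)) and ψ : Multiplicative (ZMod (2*q)) →* MulAut (Multiplicative (ZMod p)) be injective homomorphisms, and set N₅ = C₂ × (C_p ⋊[φ] C_q) and N₆ = C_p ⋊[ψ] C_{2q}. Then no subgroup of Equiv.Perm (DihedralGroup (p*q)) that is contained in Hol(D_{pq}) and transitive on D_{pq} is isomorphic, as an abstract group, to Hol(N₅) (i.e. to N₅ ⋊ Aut(N₅)), and none is isomorphic to Hol(N₆) (i.e. to N₆ ⋊ Aut(N₆)). -/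
/-- A group `G` embeds transitively in `Hol(N)` if there is an injective
homomorphism `G →* Equiv.Perm N` whose range lies in `Hol(N)` and is
transitive on `N`. -/
def EmbedsTransitively (G : Type*) [Group G] (N : Type*) [Group N] : Prop :=
  ∃ φ : G →* Equiv.Perm N, Function.Injective φ ∧ φ.range ≤ Hol N ∧
    IsTransitiveSubgroup φ.range

/-! In `Hol(D_n)` with `n = pq` odd, every element acts by `r i ↦ r (a i + k₁)`,
`sr i ↦ sr (a i + k₂)` or swaps rotations and reflections, and elements of odd order cannot swap.
Since `p` does not divide `totient (pq) = (p - 1)(q - 1)`, an element of order `p` has `a = 1`: it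
translates by vectors in the order-`p` subgroup of `ZMod (pq)`, and an element with multiplier `a`
commutes with it iff `a` fixes these vectors. On that cyclic group of prime order `a` acts by a
scalar, so it fixes either everything or no nonzero vector.

In `Hol(A) = A ⋊ Aut A`, however, if `a ∈ A` has order `p` and `g ∈ A` of order dividing `q` does
not commute with `a` (both `N₅` and `N₆` contain such a pair because `φ` and `ψ` are injective),
then `inl g` commutes with the nontrivial `p`-element `(a⁻¹, conj a)` of the right regular
representation but not with `inl a`. -/

open Function Multiplicative

lemma IsCoprime.eq_zero_of_mul_eq_zero {R : Type*} [CommSemiring R] {x y w : R}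
    (h : IsCoprime x y) (hx : x * w = 0) (hy : y * w = 0) : w = 0 := by
  obtain ⟨u, v, huv⟩ := h
  calc w = (u * x + v * y) * w := by rw [huv, one_mul]
    _ = u * (x * w) + v * (y * w) := by ring
    _ = 0 := by rw [hx, hy, mul_zero, mul_zero, add_zero]

lemma affine_iterate_apply {R : Type*} [CommSemiring R] (a k x : R) (m : ℕ) :
    (fun i => a * i + k)^[m] x = a ^ m * x + (fun i => a * i + k)^[m] 0 := by
  induction m with
  | zero => simp
  | succ m ih => rw [iterate_succ_apply', iterate_succ_apply', ih, pow_succ]; ring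

lemma pow_eq_one_of_affine_iterate_eq_id {R : Type*} [CommSemiring R] {a k : R} {m : ℕ}
    (h : (fun i => a * i + k)^[m] = id) : a ^ m = 1 := by
  have h1 := affine_iterate_apply a k 1 m
  rwa [h, id, id, mul_one, add_zero, eq_comm] at h1

lemma Nat.Prime.coprime_totient_mul_of_lt {p q : ℕ} (hp : p.Prime) (hq : q.Prime) (hlt : q < p) :
    p.Coprime (p * q).totient := by
  rw [Nat.totient_mul ((Nat.coprime_primes hp hq).mpr hlt.ne'), Nat.totient_prime hp,
    Nat.totient_prime hq]
  have coprime_of_lt : ∀ m, 0 < m → m < p → p.Coprime m := fun m h0 hm =>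
    hp.coprime_iff_not_dvd.mpr (Nat.not_dvd_of_pos_of_lt h0 hm)
  exact Nat.Coprime.mul_right (coprime_of_lt _ (by have := hp.two_le; omega) (by omega))
    (coprime_of_lt _ (by have := hq.two_le; omega) (by omega))

namespace ZMod

variable {n : ℕ} [NeZero n]

lemma eq_one_of_pow_eq_one {p : ℕ} (hp : p ≠ 0) (hcop : p.Coprime n.totient) {a : ZMod n}
    (ha : a ^ p = 1) : a = 1 := by
  obtain ⟨u, rfl⟩ := IsUnit.of_pow_eq_one ha hp
  have hcard : (Nat.card (ZMod n)ˣ).Coprime p := by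
    rw [Nat.card_eq_fintype_card, ZMod.card_units_eq_totient]; exact hcop.symm
  have hu : u ^ p = 1 ^ p := by rw [one_pow]; exact Units.ext (by simpa using ha)
  rw [hcard.pow_left_bijective.injective hu, Units.val_one]

lemma isCoprime_natCast_of_mul_ne_zero {p : ℕ} (hp : p.Prime) {d v : ZMod n}
    (hv : (p : ZMod n) * v = 0) (hdv : d * v ≠ 0) : IsCoprime (p : ZMod n) d := by
  rcases Nat.coprime_or_dvd_of_prime hp d.val with hcop | ⟨m, hm⟩
  · simpa using (Nat.isCoprime_iff_coprime.mpr hcop).map (Int.castRingHom (ZMod n))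
  · refine absurd ?_ hdv
    rw [← natCast_zmod_val d, hm, Nat.cast_mul, mul_right_comm, hv, zero_mul]

end ZMod

lemma MulAut.eq_one_of_apply_ofAdd_one {m : ℕ} [NeZero m] {σ : MulAut (Multiplicative (ZMod m))}
    (h : σ (ofAdd 1) = ofAdd 1) : σ = 1 := by
  ext x
  have hx : x = ofAdd (1 : ZMod m) ^ (toAdd x).val := by
    rw [← ofAdd_nsmul, nsmul_one, ZMod.natCast_zmod_val, ofAdd_toAdd]
  rw [hx, map_pow, h, MulAut.one_apply]

lemma ZMod.ofAdd_one_pow_self (m : ℕ) : ofAdd (1 : ZMod m) ^ m = 1 := by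
  rw [← ofAdd_nsmul, nsmul_one, ZMod.natCast_self, ofAdd_zero]

lemma exists_monoidHom_of_mem_Hol {N : Type*} [Group N] {π : Equiv.Perm N} (hπ : π ∈ Hol N) :
    ∃ f : N →* N, Injective f ∧ ∀ g, π g = f g * π 1 := by
  have hconj : ∀ g : N, ∃ h : N, ∀ x, π (g * x) = h * π x := by
    intro g
    obtain ⟨h, hh⟩ := (Subgroup.mem_normalizer_iff.mp hπ (leftReg N g)).mp ⟨g, rfl⟩
    exact ⟨h, fun x => by simpa [leftReg] using (DFunLike.congr_fun hh (π x)).symm⟩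
  choose f hf using hconj
  have hf1 : ∀ g, π g = f g * π 1 := fun g => by simpa using hf g 1
  have hmul : ∀ g h, f (g * h) = f g * f h := fun g h =>
    mul_right_cancel (b := π 1) <| by rw [← hf1, hf, hf1, mul_assoc]
  refine ⟨MonoidHom.mk' f hmul, fun g g' hgg => π.injective ?_, hf1⟩
  rw [hf1 g, hf1 g']
  exact congrArg (· * π 1) hgg

namespace DihedralGroup

variable {n : ℕ}

lemma orderOf_r_ne_two (hn : Odd n) (i : ZMod n) : orderOf (r i) ≠ 2 := by
  intro h
  have hdvd : orderOf (r i) ∣ n :=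
    orderOf_dvd_of_pow_eq_one (by rw [r_pow, ZMod.natCast_self, mul_zero, r_zero])
  rw [h] at hdvd
  exact hn.not_two_dvd_nat hdvd

lemma exists_affine_of_injective (hn : Odd n) {f : DihedralGroup n →* DihedralGroup n}
    (hf : Injective f) :
    ∃ j c : ZMod n, (∀ i, f (r i) = r (j * i)) ∧ ∀ i, f (sr i) = sr (j * i + c) := by
  have : NeZero n := ⟨hn.pos.ne'⟩
  obtain ⟨j, hj⟩ : ∃ j, f (r 1) = r j := by
    rcases h : f (r 1) with j | j
    · exact ⟨j, rfl⟩
    · have hord := orderOf_injective f hf (r 1)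
      rw [h, orderOf_sr, orderOf_r_one] at hord
      exact absurd (hord ▸ hn) (by decide)
  obtain ⟨c, hc⟩ : ∃ c, f (sr 0) = sr c := by
    rcases h : f (sr 0) with k | c
    · have hord := orderOf_injective f hf (sr 0)
      rw [h, orderOf_sr] at hord
      exact absurd hord (orderOf_r_ne_two hn k)
    · exact ⟨c, rfl⟩
  have hr : ∀ i, f (r i) = r (j * i) := fun i => by
    rw [← ZMod.natCast_zmod_val i, ← r_one_pow, map_pow, hj, r_pow]
  refine ⟨j, c, hr, fun i => ?_⟩
  rw [← zero_add i, ← sr_mul_r, map_mul, hc, hr, sr_mul_r, zero_add, add_comm]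

def isReflection : DihedralGroup n → Bool
  | r _ => false
  | sr _ => true

def IsAffinePerm (π : Equiv.Perm (DihedralGroup n)) (a k₁ k₂ : ZMod n) : Prop :=
  (∀ i, π (r i) = r (a * i + k₁)) ∧ ∀ i, π (sr i) = sr (a * i + k₂)

lemma exists_isAffinePerm_or_of_mem_Hol (hn : Odd n) {π : Equiv.Perm (DihedralGroup n)}
    (hπ : π ∈ Hol (DihedralGroup n)) :
    ∃ a k₁ k₂ : ZMod n, IsAffinePerm π a k₁ k₂ ∨
      (∀ i, π (r i) = sr (a * i + k₁)) ∧ ∀ i, π (sr i) = r (a * i + k₂) := by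
  obtain ⟨f, hf, hπf⟩ := exists_monoidHom_of_mem_Hol hπ
  obtain ⟨j, c, hr, hsr⟩ := exists_affine_of_injective hn hf
  rcases h1 : π 1 with k | k
  · refine ⟨j, k, c + k, Or.inl ⟨fun i => ?_, fun i => ?_⟩⟩
    · rw [hπf, hr, h1, r_mul_r]
    · rw [hπf, hsr, h1, sr_mul_r, add_assoc]
  · refine ⟨-j, k, k - c, Or.inr ⟨fun i => ?_, fun i => ?_⟩⟩
    · rw [hπf, hr, h1, r_mul_sr]; congr 1; ring
    · rw [hπf, hsr, h1, sr_mul_sr]; congr 1; ring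

lemma exists_isAffinePerm_of_pow_eq_one (hn : Odd n) {π : Equiv.Perm (DihedralGroup n)}
    (hπ : π ∈ Hol (DihedralGroup n)) {m : ℕ} (hm : Odd m) (hπm : π ^ m = 1) :
    ∃ a k₁ k₂ : ZMod n, IsAffinePerm π a k₁ k₂ := by
  obtain ⟨a, k₁, k₂, h | ⟨hr, hsr⟩⟩ := exists_isAffinePerm_or_of_mem_Hol hn hπ
  · exact ⟨a, k₁, k₂, h⟩
  · have hswap : Semiconj isReflection π not := by
      rintro (i | i) <;> simp [hr, hsr, isReflection]
    have := (hswap.iterate_right m) (r 0)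
    rw [← Equiv.Perm.coe_pow, hπm, Bool.involutive_not.iterate_odd hm] at this
    simp only [Equiv.Perm.one_apply, isReflection] at this
    exact (Bool.false_ne_true this).elim

namespace IsAffinePerm

variable {π σ : Equiv.Perm (DihedralGroup n)} {a k₁ k₂ : ZMod n}

lemma iterate_eq_id (h : IsAffinePerm π a k₁ k₂) {m : ℕ} (hm : π ^ m = 1) :
    (fun i => a * i + k₁)^[m] = id ∧ (fun i => a * i + k₂)^[m] = id := by
  have hr : Semiconj r (fun i => a * i + k₁) π := fun i => (h.1 i).symm
  have hsr : Semiconj sr (fun i => a * i + k₂) π := fun i => (h.2 i).symm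
  constructor <;> funext i
  · simpa [← Equiv.Perm.coe_pow, hm] using hr.iterate_right m i
  · simpa [← Equiv.Perm.coe_pow, hm] using hsr.iterate_right m i

lemma eq_one (h : IsAffinePerm π 1 0 0) : π = 1 := by
  ext (i | i) <;> simp [h.1, h.2]

lemma commute_iff {l₁ l₂ u₁ u₂ : ZMod n} (hπ : IsAffinePerm π a l₁ l₂)
    (hσ : IsAffinePerm σ 1 u₁ u₂) : Commute π σ ↔ a * u₁ = u₁ ∧ a * u₂ = u₂ := by
  constructor
  · intro h
    have h₁ := DFunLike.congr_fun h.eq (r 0)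
    have h₂ := DFunLike.congr_fun h.eq (sr 0)
    simp only [Equiv.Perm.mul_apply, hσ.1, hσ.2, hπ.1, hπ.2, r.injEq, sr.injEq] at h₁ h₂
    constructor
    · linear_combination h₁
    · linear_combination h₂
  · rintro ⟨h₁, h₂⟩
    ext (i | i)
    · simp only [Equiv.Perm.mul_apply, hσ.1, hπ.1, r.injEq]; linear_combination h₁
    · simp only [Equiv.Perm.mul_apply, hσ.2, hπ.2, sr.injEq]; linear_combination h₂

end IsAffinePerm

lemma exists_isAffinePerm_one_of_pow_eq_one (hn : Odd n) {p : ℕ} (hp : Odd p)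
    (hcop : p.Coprime n.totient) {π : Equiv.Perm (DihedralGroup n)}
    (hπ : π ∈ Hol (DihedralGroup n)) (hπp : π ^ p = 1) :
    ∃ k₁ k₂ : ZMod n, (p : ZMod n) * k₁ = 0 ∧ (p : ZMod n) * k₂ = 0 ∧ IsAffinePerm π 1 k₁ k₂ := by
  have : NeZero n := ⟨hn.pos.ne'⟩
  obtain ⟨a, k₁, k₂, h⟩ := exists_isAffinePerm_of_pow_eq_one hn hπ hp hπp
  obtain ⟨h₁, h₂⟩ := h.iterate_eq_id hπp
  obtain rfl : a = 1 :=
    ZMod.eq_one_of_pow_eq_one hp.pos.ne' hcop (pow_eq_one_of_affine_iterate_eq_id h₁)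
  simp only [one_mul, add_right_iterate] at h₁ h₂
  refine ⟨k₁, k₂, ?_, ?_, h⟩
  · simpa [nsmul_eq_mul] using congrFun h₁ 0
  · simpa [nsmul_eq_mul] using congrFun h₂ 0

/-- The multiplier `a` of `B` acts on the order-`p` subgroup of `ZMod n` by a scalar, so it
fixes either all of it (and `B` commutes with `X`) or no nonzero vector (and `Y = 1`). -/
theorem eq_one_of_commute_of_not_commute (hn : Odd n) {p q : ℕ} (hp : p.Prime) (hpodd : Odd p)
    (hcop : p.Coprime n.totient) (hq : Odd q) {X Y B : Equiv.Perm (DihedralGroup n)}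
    (hX : X ∈ Hol (DihedralGroup n)) (hY : Y ∈ Hol (DihedralGroup n))
    (hB : B ∈ Hol (DihedralGroup n)) (hXp : X ^ p = 1) (hYp : Y ^ p = 1) (hBq : B ^ q = 1)
    (hBY : Commute B Y) (hBX : ¬Commute B X) : Y = 1 := by
  have : NeZero n := ⟨hn.pos.ne'⟩
  obtain ⟨k₁, k₂, hk₁, hk₂, hXa⟩ := exists_isAffinePerm_one_of_pow_eq_one hn hpodd hcop hX hXp
  obtain ⟨m₁, m₂, hm₁, hm₂, hYa⟩ := exists_isAffinePerm_one_of_pow_eq_one hn hpodd hcop hY hYp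
  obtain ⟨a, l₁, l₂, hBa⟩ := exists_isAffinePerm_of_pow_eq_one hn hB hq hBq
  obtain ⟨hm₁a, hm₂a⟩ := (hBa.commute_iff hYa).mp hBY
  have hfix : ∀ v : ZMod n, a * v = v ↔ (a - 1) * v = 0 := fun v => by
    rw [sub_mul, one_mul, sub_eq_zero]
  have hcop_sub : IsCoprime (p : ZMod n) (a - 1) := by
    rw [hBa.commute_iff hXa, not_and_or, hfix, hfix] at hBX
    rcases hBX with h | h
    · exact ZMod.isCoprime_natCast_of_mul_ne_zero hp hk₁ h
    · exact ZMod.isCoprime_natCast_of_mul_ne_zero hp hk₂ h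
  rw [hfix] at hm₁a hm₂a
  obtain rfl := hcop_sub.eq_zero_of_mul_eq_zero hm₁ hm₁a
  obtain rfl := hcop_sub.eq_zero_of_mul_eq_zero hm₂ hm₂a
  exact hYa.eq_one

end DihedralGroup

lemma exists_noncommuting_of_injective {A A' : Type*} [Group A] [Group A'] {p q : ℕ}
    {f : A →* A'} (hf : Injective f)
    (h : ∃ a g : A, a ^ p = 1 ∧ a ≠ 1 ∧ g ^ q = 1 ∧ ¬Commute g a) :
    ∃ a g : A', a ^ p = 1 ∧ a ≠ 1 ∧ g ^ q = 1 ∧ ¬Commute g a := by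
  obtain ⟨a, g, ha, ha1, hg, hga⟩ := h
  exact ⟨f a, f g, by rw [← map_pow, ha, map_one], (map_ne_one_iff f hf).mpr ha1,
    by rw [← map_pow, hg, map_one], fun h => hga (h.of_map hf)⟩

namespace SemidirectProduct

/-- The right regular representation inside `A ⋊ Aut A`: `(a⁻¹, conj a)` acts on `A` by
`x ↦ x * a⁻¹`, hence commutes with the left translations `inl A`. -/
def holRight (A : Type*) [Group A] : A →* A ⋊[MonoidHom.id (MulAut A)] MulAut A where
  toFun a := ⟨a⁻¹, MulAut.conj a⟩
  map_one' := by ext <;> simp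
  map_mul' a b := by
    ext
    · simp only [mul_left, MonoidHom.id_apply, MulAut.conj_apply, mul_inv_rev]
      group
    · simp only [mul_right, map_mul]

variable {A : Type*} [Group A]

lemma holRight_injective : Injective (holRight A) := fun a b h => by
  simpa [holRight] using congrArg left h

lemma commute_inl_holRight (g a : A) : Commute (inl g) (holRight A a) := by
  ext
  · simp [holRight]; group
  · simp [holRight]

lemma not_commute_inr_inl_ofAdd_one {p : ℕ} [NeZero p] {H : Type*} [Group H]
    {φ : H →* MulAut (Multiplicative (ZMod p))} (hφ : Injective φ) {h : H} (hh : h ≠ 1) :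
    ¬Commute (inr h : Multiplicative (ZMod p) ⋊[φ] H) (inl (ofAdd 1)) := by
  intro hc
  have hfix : φ h (ofAdd 1) = ofAdd 1 := inl_injective <| by
    rw [inl_aut, hc.eq, map_inv, mul_inv_cancel_right]
  exact hh (hφ (by rw [MulAut.eq_one_of_apply_ofAdd_one hfix, map_one]))

lemma exists_noncommuting {p q : ℕ} [Fact (1 < p)] {H : Type*} [Group H]
    {φ : H →* MulAut (Multiplicative (ZMod p))} (hφ : Injective φ) {h : H} (hhq : h ^ q = 1)
    (hh : h ≠ 1) :
    ∃ a g : Multiplicative (ZMod p) ⋊[φ] H, a ^ p = 1 ∧ a ≠ 1 ∧ g ^ q = 1 ∧ ¬Commute g a :=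
  ⟨inl (ofAdd 1), inr h,
    by rw [← map_pow, ZMod.ofAdd_one_pow_self, map_one],
    (map_ne_one_iff inl inl_injective).mpr (by simp),
    by rw [← map_pow, hhq, map_one], not_commute_inr_inl_ofAdd_one hφ hh⟩

end SemidirectProduct

namespace DihedralGroup

open SemidirectProduct in
theorem not_nonempty_mulEquiv_hol_of_le_Hol {n p q : ℕ} (hn : Odd n) (hp : p.Prime)
    (hpodd : Odd p) (hcop : p.Coprime n.totient) (hq : Odd q) {A : Type*} [Group A]
    (hA : ∃ a g : A, a ^ p = 1 ∧ a ≠ 1 ∧ g ^ q = 1 ∧ ¬Commute g a)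
    {M : Subgroup (Equiv.Perm (DihedralGroup n))} (hM : M ≤ Hol (DihedralGroup n)) :
    ¬Nonempty (M ≃* A ⋊[MonoidHom.id (MulAut A)] MulAut A) := by
  rintro ⟨e⟩
  obtain ⟨a, g, ha, ha1, hg, hga⟩ := hA
  set F := M.subtype.comp e.symm.toMonoidHom
  have hF : Injective F := M.subtype_injective.comp e.symm.injective
  have hFHol : ∀ x, F x ∈ Hol (DihedralGroup n) := fun x => hM (e.symm x).2
  have hFpow : ∀ {x} {m : ℕ}, x ^ m = 1 → F x ^ m = 1 := fun h => by
    rw [← map_pow, h, map_one]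
  refine ha1 (holRight_injective (hF ?_))
  rw [map_one, map_one]
  exact eq_one_of_commute_of_not_commute hn hp hpodd hcop hq (hFHol (inl a))
    (hFHol (holRight A a)) (hFHol (inl g)) (hFpow (by rw [← map_pow, ha, map_one]))
    (hFpow (by rw [← map_pow, ha, map_one])) (hFpow (by rw [← map_pow, hg, map_one]))
    ((commute_inl_holRight g a).map F)
    (fun h => hga (h.of_map (f := F.comp inl) (hF.comp inl_injective)))

end DihedralGroup

theorem no_transitive_subgroup_iso_hol_N5_or_N6_general (p q : ℕ)
    (hp : p.Prime) (hq : q.Prime) (hpodd : Odd p) (hqodd : Odd q) (hlt : q < p)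
    (φ : Multiplicative (ZMod q) →* MulAut (Multiplicative (ZMod p)))
    (hφ : Function.Injective φ)
    (ψ : Multiplicative (ZMod (2 * q)) →* MulAut (Multiplicative (ZMod p)))
    (hψ : Function.Injective ψ)
    (M : Subgroup (Equiv.Perm (DihedralGroup (p * q))))
    (hM : M ≤ Hol (DihedralGroup (p * q))) :
    ¬ Nonempty (M ≃*
        SemidirectProduct
          (Multiplicative (ZMod 2) ×
            SemidirectProduct (Multiplicative (ZMod p)) (Multiplicative (ZMod q)) φ)
          (MulAut (Multiplicative (ZMod 2) ×
            SemidirectProduct (Multiplicative (ZMod p)) (Multiplicative (ZMod q)) φ))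
          (MonoidHom.id (MulAut (Multiplicative (ZMod 2) ×
            SemidirectProduct (Multiplicative (ZMod p)) (Multiplicative (ZMod q)) φ)))) ∧
    ¬ Nonempty (M ≃*
        SemidirectProduct
          (SemidirectProduct (Multiplicative (ZMod p)) (Multiplicative (ZMod (2 * q))) ψ)
          (MulAut (SemidirectProduct (Multiplicative (ZMod p)) (Multiplicative (ZMod (2 * q))) ψ))
          (MonoidHom.id
            (MulAut (SemidirectProduct (Multiplicative (ZMod p)) (Multiplicative (ZMod (2 * q))) ψ)))) := by
  have : Fact (1 < p) := ⟨hp.one_lt⟩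
  have : Fact (1 < q) := ⟨hq.one_lt⟩
  have hn := hpodd.mul hqodd
  have hcop := hp.coprime_totient_mul_of_lt hq hlt
  refine ⟨DihedralGroup.not_nonempty_mulEquiv_hol_of_le_Hol hn hp hpodd hcop hqodd ?_ hM,
    DihedralGroup.not_nonempty_mulEquiv_hol_of_le_Hol hn hp hpodd hcop hqodd ?_ hM⟩
  · exact exists_noncommuting_of_injective (f := MonoidHom.inr _ _) (Prod.mk_right_injective 1)
      (SemidirectProduct.exists_noncommuting hφ (ZMod.ofAdd_one_pow_self q) (by simp))
  · refine SemidirectProduct.exists_noncommuting hψ (h := ofAdd 2) ?_ ?_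
    · rw [← ofAdd_nsmul, nsmul_eq_mul, ofAdd_eq_one]
      exact_mod_cast (ZMod.natCast_eq_zero_iff (q * 2) (2 * q)).mpr (by rw [mul_comm])
    · rw [Ne, ofAdd_eq_one]
      exact_mod_cast (ZMod.natCast_eq_zero_iff 2 (2 * q)).not.mpr
        (Nat.not_dvd_of_pos_of_lt two_pos (by have := hq.two_le; omega))

theorem no_transitive_subgroup_iso_hol_N5_or_N6 (p q : ℕ)
    (hp : p.Prime) (hq : q.Prime) (hpodd : Odd p) (hqodd : Odd q) (hlt : q < p)
    (hmod : p ≡ 1 [MOD q])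
    (φ : Multiplicative (ZMod q) →* MulAut (Multiplicative (ZMod p)))
    (hφ : Function.Injective φ)
    (ψ : Multiplicative (ZMod (2 * q)) →* MulAut (Multiplicative (ZMod p)))
    (hψ : Function.Injective ψ)
    (M : Subgroup (Equiv.Perm (DihedralGroup (p * q))))
    (hM : M ≤ Hol (DihedralGroup (p * q)))
    (htrans : IsTransitiveSubgroup M) :
    ¬ Nonempty (M ≃*
        SemidirectProduct
          (Multiplicative (ZMod 2) ×
            SemidirectProduct (Multiplicative (ZMod p)) (Multiplicative (ZMod q)) φ)
          (MulAut (Multiplicative (ZMod 2) ×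
            SemidirectProduct (Multiplicative (ZMod p)) (Multiplicative (ZMod q)) φ))
          (MonoidHom.id (MulAut (Multiplicative (ZMod 2) ×
            SemidirectProduct (Multiplicative (ZMod p)) (Multiplicative (ZMod q)) φ)))) ∧
    ¬ Nonempty (M ≃*
        SemidirectProduct
          (SemidirectProduct (Multiplicative (ZMod p)) (Multiplicative (ZMod (2 * q))) ψ)
          (MulAut (SemidirectProduct (Multiplicative (ZMod p)) (Multiplicative (ZMod (2 * q))) ψ))
          (MonoidHom.id
            (MulAut (SemidirectProduct (Multiplicative (ZMod p)) (Multiplicative (ZMod (2 * q))) ψ)))) :=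
  no_transitive_subgroup_iso_hol_N5_or_N6_general p q hp hq hpodd hqodd hlt φ hφ ψ hψ M hM
end

section
/- Let p > q be odd primes. Then Hol(D_{pq}) contains a regular subgroup isomorphic to the cyclic group C_{2pq}; that is, there exists a subgroup M of Equiv.Perm (DihedralGroup (p*q)) contained in Hol(D_{pq}) such that M is transitive on DihedralGroup (p*q), M has order 2pq (equivalently, the stabilizer in M of every point is trivial), and M is isomorphic as a group to Multiplicative (ZMod (2*p*q)). -/
/-! Let `s = sr 0` and let `α` be the automorphism of `D_n` fixing the rotations and sending
`s ↦ s r`. The permutation `σ = λ(s) ∘ α` lies in `Hol(D_n)`, and `σ²` is right multiplication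
by `r`, so the orbit of `1` under `σ` runs through `r^t` and `s r^t = σ(r^t)`: the cyclic group
`⟨σ⟩` is transitive. As `σ^(2n) = 1`, transitivity forces `|⟨σ⟩| = 2n`, hence `⟨σ⟩` is a
regular subgroup of `Hol(D_n)` isomorphic to `C_{2n}`. -/

section Holomorph

variable {N : Type*} [Group N]

theorem leftReg_mem_Hol (g : N) : leftReg N g ∈ Hol N :=
  Subgroup.le_normalizer ⟨g, rfl⟩

theorem mulAut_toPerm_mul_leftReg_mul_inv (f : MulAut N) (g : N) :
    MulAut.toPerm N f * leftReg N g * (MulAut.toPerm N f)⁻¹ = leftReg N (f g) := by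
  ext x
  change f (g * f.symm x) = f g * x
  rw [map_mul, MulEquiv.apply_symm_apply]

theorem mulAut_toPerm_mem_Hol (f : MulAut N) : MulAut.toPerm N f ∈ Hol N := by
  refine Subgroup.mem_normalizer_iff.mpr fun h ↦ ⟨?_, ?_⟩
  · rintro ⟨g, rfl⟩
    exact ⟨f g, (mulAut_toPerm_mul_leftReg_mul_inv f g).symm⟩
  · rintro ⟨g, hg⟩
    refine ⟨f⁻¹ g, ?_⟩
    rw [← mulAut_toPerm_mul_leftReg_mul_inv, hg, map_inv]
    group

theorem isTransitiveSubgroup_of_forall_exists_apply_eq {M : Subgroup (Equiv.Perm N)} (a₀ : N)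
    (h : ∀ b, ∃ g ∈ M, g a₀ = b) : IsTransitiveSubgroup M := by
  intro a b
  obtain ⟨g, hg, rfl⟩ := h a
  obtain ⟨k, hk, rfl⟩ := h b
  exact ⟨k * g⁻¹, M.mul_mem hk (M.inv_mem hg), by simp⟩

theorem card_le_card_of_isTransitiveSubgroup [Finite N] {M : Subgroup (Equiv.Perm N)}
    (hM : IsTransitiveSubgroup M) : Nat.card N ≤ Nat.card M :=
  Nat.card_le_card_of_surjective (fun g : M ↦ g.1 1) fun b ↦
    let ⟨g, hg, hgb⟩ := hM 1 b
    ⟨⟨g, hg⟩, hgb⟩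

theorem card_zpowers_eq_card_of_isTransitiveSubgroup [Finite N] {σ : Equiv.Perm N}
    (htr : IsTransitiveSubgroup (Subgroup.zpowers σ)) (hpow : σ ^ Nat.card N = 1) :
    Nat.card (Subgroup.zpowers σ) = Nat.card N := by
  refine le_antisymm ?_ (card_le_card_of_isTransitiveSubgroup htr)
  rw [Nat.card_zpowers]
  exact Nat.le_of_dvd Nat.card_pos (orderOf_dvd_of_pow_eq_one hpow)

theorem exists_regular_cyclic_subgroup_le_Hol [Finite N] {σ : Equiv.Perm N} (hHol : σ ∈ Hol N)
    (htr : IsTransitiveSubgroup (Subgroup.zpowers σ)) (hpow : σ ^ Nat.card N = 1) :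
    ∃ M : Subgroup (Equiv.Perm N), M ≤ Hol N ∧ IsTransitiveSubgroup M ∧
      Nat.card M = Nat.card N ∧ Nonempty (M ≃* Multiplicative (ZMod (Nat.card N))) := by
  have hcard := card_zpowers_eq_card_of_isTransitiveSubgroup htr hpow
  exact ⟨_, Subgroup.zpowers_le.mpr hHol, htr, hcard,
    ⟨hcard ▸ (zmodCyclicMulEquiv inferInstance).symm⟩⟩

end Holomorph

namespace DihedralGroup

variable {n : ℕ}

def shiftReflections (n : ℕ) : MulAut (DihedralGroup n) where
  toFun
    | r i => r i
    | sr i => sr (i + 1)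
  invFun
    | r i => r i
    | sr i => sr (i - 1)
  left_inv x := by cases x <;> simp
  right_inv x := by cases x <;> simp
  map_mul' x y := by
    cases x <;> cases y <;> simp only [r_mul_r, r_mul_sr, sr_mul_r, sr_mul_sr] <;> ring_nf

def regularCycle (n : ℕ) : Equiv.Perm (DihedralGroup n) :=
  leftReg _ (sr 0) * MulAut.toPerm _ (shiftReflections n)

@[simp]
theorem regularCycle_r (i : ZMod n) : regularCycle n (r i) = sr i := by
  change sr 0 * r i = sr i
  rw [sr_mul_r, zero_add]

@[simp]
theorem regularCycle_sr (i : ZMod n) : regularCycle n (sr i) = r (i + 1) := by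
  change sr 0 * sr (i + 1) = r (i + 1)
  rw [sr_mul_sr, sub_zero]

theorem regularCycle_mem_Hol : regularCycle n ∈ Hol (DihedralGroup n) :=
  Subgroup.mul_mem _ (leftReg_mem_Hol _) (mulAut_toPerm_mem_Hol _)

theorem regularCycle_sq_apply (x : DihedralGroup n) : (regularCycle n ^ 2) x = x * r 1 := by
  cases x <;> simp [sq, r_mul_r, sr_mul_r]

theorem regularCycle_pow_two_mul_apply (t : ℕ) (x : DihedralGroup n) :
    (regularCycle n ^ (2 * t)) x = x * r t := by
  induction t generalizing x with
  | zero => simp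
  | succ t ih =>
    rw [mul_add_one, pow_add, Equiv.Perm.mul_apply, ih, regularCycle_sq_apply, mul_assoc,
      r_mul_r, Nat.cast_succ, add_comm]

theorem regularCycle_pow_card [NeZero n] :
    regularCycle n ^ Nat.card (DihedralGroup n) = 1 := by
  ext x
  rw [nat_card, regularCycle_pow_two_mul_apply, ZMod.natCast_self, ← one_def, mul_one]
  rfl

theorem isTransitiveSubgroup_zpowers_regularCycle [NeZero n] :
    IsTransitiveSubgroup (Subgroup.zpowers (regularCycle n)) := by
  refine isTransitiveSubgroup_of_forall_exists_apply_eq 1 fun b ↦ ?_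
  cases b with
  | r i =>
    refine ⟨_, Subgroup.npow_mem_zpowers _ (2 * i.val), ?_⟩
    rw [regularCycle_pow_two_mul_apply, ZMod.natCast_zmod_val, one_mul]
  | sr i =>
    refine ⟨_, Subgroup.npow_mem_zpowers _ (2 * i.val + 1), ?_⟩
    rw [pow_succ', Equiv.Perm.mul_apply, regularCycle_pow_two_mul_apply,
      ZMod.natCast_zmod_val, one_mul, regularCycle_r]

end DihedralGroup

theorem hol_dihedral_has_regular_cyclic_subgroup_general (p q : ℕ)
    (hp : p.Prime) (hq : q.Prime) :
    ∃ M : Subgroup (Equiv.Perm (DihedralGroup (p * q))),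
      M ≤ Hol (DihedralGroup (p * q)) ∧
      IsTransitiveSubgroup M ∧
      Nat.card M = 2 * p * q ∧
      Nonempty (M ≃* Multiplicative (ZMod (2 * p * q))) := by
  have : NeZero (p * q) := ⟨(Nat.mul_pos hp.pos hq.pos).ne'⟩
  have hcard : Nat.card (DihedralGroup (p * q)) = 2 * p * q := by
    rw [DihedralGroup.nat_card, mul_assoc]
  rw [← hcard]
  exact exists_regular_cyclic_subgroup_le_Hol DihedralGroup.regularCycle_mem_Hol
    DihedralGroup.isTransitiveSubgroup_zpowers_regularCycle DihedralGroup.regularCycle_pow_card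

theorem hol_dihedral_has_regular_cyclic_subgroup (p q : ℕ)
    (hp : p.Prime) (hq : q.Prime) (hpodd : Odd p) (hqodd : Odd q) (hlt : q < p) :
    ∃ M : Subgroup (Equiv.Perm (DihedralGroup (p * q))),
      M ≤ Hol (DihedralGroup (p * q)) ∧
      IsTransitiveSubgroup M ∧
      Nat.card M = 2 * p * q ∧
      Nonempty (M ≃* Multiplicative (ZMod (2 * p * q))) :=
  hol_dihedral_has_regular_cyclic_subgroup_general p q hp hq
end
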